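/- arXiv:1402.6909 — 2 statements merged into one kernel-verified Lean document; each statement's English description precedes it below -/
import Mathlib

section
/- Complementarity dual principle: if (τ̄, λ̄, σ̄) is a critical point of Ξ₀ (i.e., all partial derivatives, where defined, vanish), then σ̄ᵢ = √(λ̄ᵢ² + gᵢ(τ̄)²) − λ̄ᵢ + gᵢ(τ̄) for each i, (τ̄, λ̄) is a critical point of P, and P(τ̄, λ̄) = Ξ₀(τ̄, λ̄, σ̄). -/
/-!
Completing the square in `σ` gives `Ξ₀(p, σ) = P(p) - ½ ∑ᵢ (σᵢ - ξᵢ(p))²`. Hence the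
`σ`-derivative of `Ξ₀` at the critical point `(p̄, σ̄)` vanishes only if `σ̄ = ξ(p̄)`, which also
gives `P(p̄) = Ξ₀(p̄, σ̄)`. Moreover `P(p) = Ξ₀(p, σ̄) + ½ ∑ᵢ (ξᵢ(p̄) - ξᵢ(p))²`: the first term is
stationary at `p̄`, and the second is `O(‖p - p̄‖²)` because `ξ` is Lipschitz, `(a, b) ↦ √(a² + b²)`
being a norm.
-/

open Matrix

noncomputable def gfun (N m : ℕ) (A B : Matrix (Fin m) (Fin N) ℝ) (c : Fin m → ℝ)
    (τ : Fin N → ℝ) : Fin m → ℝ := A.mulVec τ + B.mulVec τ - c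

noncomputable def xi (N m : ℕ) (A B : Matrix (Fin m) (Fin N) ℝ) (c : Fin m → ℝ)
    (τ : Fin N → ℝ) (lam : Fin m → ℝ) (i : Fin m) : ℝ :=
  Real.sqrt (lam i ^ 2 + gfun N m A B c τ i ^ 2) - lam i + gfun N m A B c τ i

noncomputable def Xi0 (N m : ℕ) (D : Matrix (Fin N) (Fin N) ℝ)
    (A B : Matrix (Fin m) (Fin N) ℝ) (c : Fin m → ℝ) (e : Fin N → ℝ)
    (τ : Fin N → ℝ) (lam σ : Fin m → ℝ) : ℝ :=
  (∑ i, (σ i * xi N m A B c τ lam i - (1 / 2) * σ i ^ 2)) +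
  (1 / 2) * (Sum.elim τ lam ⬝ᵥ
    (Matrix.fromRows D.transpose A *
      (Matrix.fromRows D.transpose A).transpose).mulVec (Sum.elim τ lam)) -
  (-(Matrix.fromRows D.transpose A).mulVec e) ⬝ᵥ Sum.elim τ lam

noncomputable def Pfun (N m : ℕ) (D : Matrix (Fin N) (Fin N) ℝ)
    (A B : Matrix (Fin m) (Fin N) ℝ) (c : Fin m → ℝ) (e : Fin N → ℝ)
    (τ : Fin N → ℝ) (lam : Fin m → ℝ) : ℝ :=
  (1 / 2) * (∑ i, xi N m A B c τ lam i ^ 2) +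
  (1 / 2) * (Sum.elim τ lam ⬝ᵥ
    (Matrix.fromRows D.transpose A *
      (Matrix.fromRows D.transpose A).transpose).mulVec (Sum.elim τ lam)) -
  (-(Matrix.fromRows D.transpose A).mulVec e) ⬝ᵥ Sum.elim τ lam

open Asymptotics Filter Topology

section CriticalPoint

variable {E ι : Type*} [NormedAddCommGroup E] [NormedSpace ℝ E] [Fintype ι]

theorem eq_of_hasFDerivAt_const_sub_half_sum_sq {f : (ι → ℝ) → ℝ} {c : ℝ} {ξ σ₀ : ι → ℝ}
    (hf : ∀ σ, f σ = c - (1 / 2) * ∑ i, (σ i - ξ i) ^ 2)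
    (hcrit : HasFDerivAt f (0 : (ι → ℝ) →L[ℝ] ℝ) σ₀) :
    σ₀ = ξ := by
  set v := σ₀ - ξ with hv_def
  set S := ∑ i, v i ^ 2 with hS_def
  have hray : (fun t : ℝ => f (σ₀ + t • v)) = fun t => c - (1 / 2) * ((1 + t) ^ 2 * S) := by
    funext t
    rw [hf]
    congr 2
    rw [hS_def, Finset.mul_sum]
    refine Finset.sum_congr rfl fun i _ => ?_
    simp only [hv_def, Pi.add_apply, Pi.sub_apply, Pi.smul_apply, smul_eq_mul]
    ring
  have hline : HasDerivAt (fun t : ℝ => σ₀ + t • v) v 0 := by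
    simpa using ((hasDerivAt_id (0 : ℝ)).smul_const v).const_add σ₀
  have hzero : HasDerivAt (fun t : ℝ => c - (1 / 2) * ((1 + t) ^ 2 * S)) 0 0 := by
    have h := hcrit.comp_hasDerivAt_of_eq 0 hline (by simp)
    rwa [_root_.zero_apply, Function.comp_def, hray] at h
  have hslope : HasDerivAt (fun t : ℝ => c - (1 / 2) * ((1 + t) ^ 2 * S)) (-S) 0 :=
    (((((hasDerivAt_id' (0 : ℝ)).const_add 1).fun_pow 2).mul_const S).const_mul (1 / 2 : ℝ)
      |>.const_sub c).congr_deriv (by norm_num; ring)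
  have hS_zero : S = 0 := by linarith [hzero.unique hslope]
  have hv_zero : ∀ i, v i = 0 := fun i =>
    pow_eq_zero_iff two_ne_zero |>.mp <|
      (Finset.sum_eq_zero_iff_of_nonneg fun j _ => sq_nonneg (v j)).mp hS_zero i (Finset.mem_univ i)
  exact sub_eq_zero.mp (funext hv_zero)

theorem hasFDerivAt_half_sum_sq_sub_of_isBigO {ξ : E → ι → ℝ} {p₀ : E}
    (hξ : (fun p => ξ p - ξ p₀) =O[𝓝 p₀] fun p => p - p₀) :
    HasFDerivAt (fun p => (1 / 2) * ∑ i, (ξ p₀ i - ξ p i) ^ 2) (0 : E →L[ℝ] ℝ) p₀ := by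
  refine IsBigO.hasFDerivAt (n := 2) ?_ one_lt_two
  refine IsBigO.const_mul_left ?_ _
  refine IsBigO.fun_sum fun i _ => ?_
  have hi : (fun p => ξ p₀ i - ξ p i) =O[𝓝 p₀] fun p => ‖p - p₀‖ :=
    isBigO_norm_right.mpr <| (isBigO_pi.mp hξ i).neg_left.congr_left fun p => by simp
  exact hi.pow 2

theorem critical_point_of_eq_sub_half_sum_sq {Φ : E × (ι → ℝ) → ℝ} {P : E → ℝ} {ξ : E → ι → ℝ}
    {p₀ : E} {σ₀ : ι → ℝ} (hΦ : ∀ p σ, Φ (p, σ) = P p - (1 / 2) * ∑ i, (σ i - ξ p i) ^ 2)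
    (hξ : (fun p => ξ p - ξ p₀) =O[𝓝 p₀] fun p => p - p₀)
    (hcrit : HasFDerivAt Φ (0 : E × (ι → ℝ) →L[ℝ] ℝ) (p₀, σ₀)) :
    σ₀ = ξ p₀ ∧ HasFDerivAt P (0 : E →L[ℝ] ℝ) p₀ ∧ P p₀ = Φ (p₀, σ₀) := by
  have hσ : σ₀ = ξ p₀ := by
    refine eq_of_hasFDerivAt_const_sub_half_sum_sq (f := fun σ => Φ (p₀, σ)) (hΦ p₀) ?_
    have h := hcrit.comp σ₀ (hasFDerivAt_prodMk_right (𝕜 := ℝ) p₀ σ₀)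
    rwa [ContinuousLinearMap.zero_comp] at h
  have hslice : HasFDerivAt (fun p => Φ (p, σ₀)) (0 : E →L[ℝ] ℝ) p₀ := by
    have h := hcrit.comp p₀ (hasFDerivAt_prodMk_left (𝕜 := ℝ) p₀ σ₀)
    rwa [ContinuousLinearMap.zero_comp] at h
  have hP : P = fun p => Φ (p, σ₀) + (1 / 2) * ∑ i, (ξ p₀ i - ξ p i) ^ 2 := by
    ext p
    rw [hΦ, hσ]
    ring
  refine ⟨hσ, ?_, by simp [hΦ, hσ]⟩
  rw [hP]
  simpa using hslice.fun_add (hasFDerivAt_half_sum_sq_sub_of_isBigO hξ)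

end CriticalPoint

theorem abs_sqrt_sq_add_sq_sub_le (a b c d : ℝ) :
    |√(a ^ 2 + b ^ 2) - √(c ^ 2 + d ^ 2)| ≤ |a - c| + |b - d| := by
  have h := (abs_norm_sub_norm_le (⟨a, b⟩ : ℂ) ⟨c, d⟩).trans (Complex.norm_le_abs_re_add_abs_im _)
  simpa [Complex.norm_eq_sqrt_sq_add_sq] using h

theorem Xi0_eq_Pfun_sub (N m : ℕ) (D : Matrix (Fin N) (Fin N) ℝ)
    (A B : Matrix (Fin m) (Fin N) ℝ) (c : Fin m → ℝ) (e : Fin N → ℝ)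
    (τ : Fin N → ℝ) (lam σ : Fin m → ℝ) :
    Xi0 N m D A B c e τ lam σ =
      Pfun N m D A B c e τ lam - (1 / 2) * ∑ i, (σ i - xi N m A B c τ lam i) ^ 2 := by
  have hsum : ∑ i, (σ i * xi N m A B c τ lam i - (1 / 2) * σ i ^ 2) =
      (1 / 2) * ∑ i, xi N m A B c τ lam i ^ 2 -
        (1 / 2) * ∑ i, (σ i - xi N m A B c τ lam i) ^ 2 := by
    rw [Finset.mul_sum, Finset.mul_sum, ← Finset.sum_sub_distrib]
    exact Finset.sum_congr rfl fun i _ => by ring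
  rw [Xi0, Pfun, hsum]
  ring

theorem differentiable_gfun_apply (N m : ℕ) (A B : Matrix (Fin m) (Fin N) ℝ) (c : Fin m → ℝ)
    (i : Fin m) : Differentiable ℝ fun τ => gfun N m A B c τ i := by
  simp only [gfun, Pi.sub_apply, Pi.add_apply, mulVec, dotProduct]
  fun_prop

theorem xi_isBigO_sub (N m : ℕ) (A B : Matrix (Fin m) (Fin N) ℝ) (c : Fin m → ℝ)
    (p₀ : (Fin N → ℝ) × (Fin m → ℝ)) :
    (fun p : (Fin N → ℝ) × (Fin m → ℝ) =>
        (fun i => xi N m A B c p.1 p.2 i) - fun i => xi N m A B c p₀.1 p₀.2 i)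
      =O[𝓝 p₀] fun p => p - p₀ := by
  refine isBigO_pi.mpr fun i => ?_
  have hlam : (fun p : (Fin N → ℝ) × (Fin m → ℝ) => p.2 i - p₀.2 i) =O[𝓝 p₀] fun p => p - p₀ :=
    (show Differentiable ℝ fun p : (Fin N → ℝ) × (Fin m → ℝ) => p.2 i by fun_prop).differentiableAt
      |>.isBigO_sub
  have hg : (fun p : (Fin N → ℝ) × (Fin m → ℝ) =>
      gfun N m A B c p.1 i - gfun N m A B c p₀.1 i) =O[𝓝 p₀] fun p => p - p₀ :=
    ((differentiable_gfun_apply N m A B c i).comp differentiable_fst).differentiableAt.isBigO_sub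
  have hsqrt : (fun p : (Fin N → ℝ) × (Fin m → ℝ) =>
      √(p.2 i ^ 2 + gfun N m A B c p.1 i ^ 2) - √(p₀.2 i ^ 2 + gfun N m A B c p₀.1 i ^ 2))
        =O[𝓝 p₀] fun p => p - p₀ := by
    refine IsBigO.trans (IsBigO.of_bound' (Eventually.of_forall fun p => ?_))
      (hlam.norm_left.add hg.norm_left)
    simp only [Real.norm_eq_abs]
    rw [abs_of_nonneg (by positivity : (0 : ℝ) ≤ |_| + |_|)]
    exact abs_sqrt_sq_add_sq_sub_le _ _ _ _
  refine ((hsqrt.sub hlam).add hg).congr_left fun p => ?_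
  simp only [Pi.sub_apply, xi]
  ring

theorem complementarity_dual_principle_general (N m : ℕ) (D : Matrix (Fin N) (Fin N) ℝ)
    (A B : Matrix (Fin m) (Fin N) ℝ) (c : Fin m → ℝ) (e : Fin N → ℝ)
    (τ : Fin N → ℝ) (lam σ : Fin m → ℝ)
    (hcrit : HasFDerivAt
      (fun p : ((Fin N → ℝ) × (Fin m → ℝ)) × (Fin m → ℝ) =>
        Xi0 N m D A B c e p.1.1 p.1.2 p.2)
      (0 : ((((Fin N → ℝ) × (Fin m → ℝ)) × (Fin m → ℝ)) →L[ℝ] ℝ)) ((τ, lam), σ)) :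
    (∀ i, σ i = xi N m A B c τ lam i) ∧
    HasFDerivAt (fun p : (Fin N → ℝ) × (Fin m → ℝ) => Pfun N m D A B c e p.1 p.2)
      (0 : (((Fin N → ℝ) × (Fin m → ℝ)) →L[ℝ] ℝ)) (τ, lam) ∧
    Pfun N m D A B c e τ lam = Xi0 N m D A B c e τ lam σ := by
  obtain ⟨hσ, hP, hval⟩ := critical_point_of_eq_sub_half_sum_sq
    (P := fun p : (Fin N → ℝ) × (Fin m → ℝ) => Pfun N m D A B c e p.1 p.2)
    (fun p σ => Xi0_eq_Pfun_sub N m D A B c e p.1 p.2 σ) (xi_isBigO_sub N m A B c (τ, lam)) hcrit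
  exact ⟨congrFun hσ, hP, hval⟩

theorem complementarity_dual_principle (N m : ℕ) (D : Matrix (Fin N) (Fin N) ℝ)
    (A B : Matrix (Fin m) (Fin N) ℝ) (c : Fin m → ℝ) (e : Fin N → ℝ)
    (τ : Fin N → ℝ) (lam σ : Fin m → ℝ)
    (hnd : ∀ i, ¬(lam i = 0 ∧ gfun N m A B c τ i = 0))
    (hcrit : HasFDerivAt
      (fun p : ((Fin N → ℝ) × (Fin m → ℝ)) × (Fin m → ℝ) =>
        Xi0 N m D A B c e p.1.1 p.1.2 p.2)
      (0 : ((((Fin N → ℝ) × (Fin m → ℝ)) × (Fin m → ℝ)) →L[ℝ] ℝ)) ((τ, lam), σ)) :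
    (∀ i, σ i = xi N m A B c τ lam i) ∧
    HasFDerivAt (fun p : (Fin N → ℝ) × (Fin m → ℝ) => Pfun N m D A B c e p.1 p.2)
      (0 : (((Fin N → ℝ) × (Fin m → ℝ)) →L[ℝ] ℝ)) (τ, lam) ∧
    Pfun N m D A B c e τ lam = Xi0 N m D A B c e τ lam σ :=
  complementarity_dual_principle_general N m D A B c e τ lam σ hcrit
end

section
/- Suppose (τ*, λ*) is a global minimizer of P with P(τ*, λ*) = −(1/2)eᵀe. Then (τ*, λ*, 0_m) is a critical point of Ξ₀ with Ξ₀(τ*, λ*, 0_m) = −(1/2)eᵀe, and moreover ξᵢ(τ*, λ*) = 0 for all i (i.e., the Fischer-Burmeister residuals vanish) and Dτ* + e + Aᵀλ* = 0. -/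
open Matrix

/-! Completing the square, with `S = [Dᵀ; A]` so that `Sᵀ (τ, λ) = Dτ + Aᵀλ`, gives
`Ξ₀(τ, λ, 0) = ½ ‖Dτ + e + Aᵀλ‖² - ½ eᵀe`, and `P(τ, λ) = ½ ∑ ξᵢ² + Ξ₀(τ, λ, 0)`.
So `P(τ, λ) = -½ eᵀe` forces both squares to vanish, after which `Ξ₀(·, ·, 0)` attains its lower
bound `-½ eᵀe` at `(τ, λ)`. In `σ`, `Ξ₀` is `∑ (σᵢ ξᵢ - ½ σᵢ²)` plus a constant, whose derivative
at `σ = 0` is `ξ = 0`. -/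

theorem half_dotProduct_mul_transpose_mulVec_sub {R ι κ : Type*} [Field R] [CharZero R]
    [Fintype ι] [Fintype κ] (S : Matrix ι κ R) (e : κ → R) (x : ι → R) :
    (1 / 2) * (x ⬝ᵥ (S * Sᵀ) *ᵥ x) - (-(S *ᵥ e)) ⬝ᵥ x
      = (1 / 2) * ((Sᵀ *ᵥ x + e) ⬝ᵥ (Sᵀ *ᵥ x + e)) - (1 / 2) * (e ⬝ᵥ e) := by
  have hquad : x ⬝ᵥ (S * Sᵀ) *ᵥ x = (Sᵀ *ᵥ x) ⬝ᵥ (Sᵀ *ᵥ x) := by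
    rw [← mulVec_mulVec, dotProduct_mulVec, ← mulVec_transpose]
  have hlin : (-(S *ᵥ e)) ⬝ᵥ x = -((Sᵀ *ᵥ x) ⬝ᵥ e) := by
    rw [neg_dotProduct, dotProduct_comm, dotProduct_mulVec, ← mulVec_transpose]
  rw [hquad, hlin, add_dotProduct, dotProduct_add, dotProduct_add, dotProduct_comm e]
  ring

theorem hasFDerivAt_sum_mul_sub_half_sq {ι : Type*} [Fintype ι] (ξ : ι → ℝ) :
    HasFDerivAt (fun σ : ι → ℝ => ∑ i, (σ i * ξ i - (1 / 2) * σ i ^ 2))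
      (∑ i, ξ i • ContinuousLinearMap.proj (R := ℝ) (φ := fun _ : ι => ℝ) i) 0 := by
  refine HasFDerivAt.fun_sum fun i _ => ?_
  have hproj := hasFDerivAt_apply (𝕜 := ℝ) (F' := fun _ : ι => ℝ) i 0
  exact ((hproj.mul_const (ξ i)).sub ((hproj.pow 2).const_mul (1 / 2 : ℝ))).congr_fderiv
    (by simp)

section

variable {N m : ℕ} (D : Matrix (Fin N) (Fin N) ℝ) (A B : Matrix (Fin m) (Fin N) ℝ)
  (c : Fin m → ℝ) (e : Fin N → ℝ) (τ : Fin N → ℝ) (lam : Fin m → ℝ)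

theorem half_dotProduct_fromRows_mul_transpose_sub :
    (1 / 2) * (Sum.elim τ lam ⬝ᵥ
      (fromRows Dᵀ A * (fromRows Dᵀ A)ᵀ) *ᵥ Sum.elim τ lam) -
      (-(fromRows Dᵀ A *ᵥ e)) ⬝ᵥ Sum.elim τ lam
      = (1 / 2) * ((D *ᵥ τ + e + Aᵀ *ᵥ lam) ⬝ᵥ (D *ᵥ τ + e + Aᵀ *ᵥ lam)) -
        (1 / 2) * (e ⬝ᵥ e) := by
  rw [half_dotProduct_mul_transpose_mulVec_sub, transpose_fromRows,
    fromCols_mulVec_sumElim, transpose_transpose, add_right_comm]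

theorem Xi0_zero_eq_half_residual_sq_sub :
    Xi0 N m D A B c e τ lam 0
      = (1 / 2) * ((D *ᵥ τ + e + Aᵀ *ᵥ lam) ⬝ᵥ (D *ᵥ τ + e + Aᵀ *ᵥ lam)) -
        (1 / 2) * (e ⬝ᵥ e) := by
  simpa [Xi0] using half_dotProduct_fromRows_mul_transpose_sub D A e τ lam

theorem Pfun_eq_half_sum_xi_sq_add_Xi0_zero :
    Pfun N m D A B c e τ lam
      = (1 / 2) * (∑ i, xi N m A B c τ lam i ^ 2) + Xi0 N m D A B c e τ lam 0 := by
  rw [Pfun, add_sub_assoc, half_dotProduct_fromRows_mul_transpose_sub, Xi0_zero_eq_half_residual_sq_sub]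

theorem hasFDerivAt_Xi0 :
    HasFDerivAt (fun σ : Fin m → ℝ => Xi0 N m D A B c e τ lam σ)
      (∑ i, xi N m A B c τ lam i • ContinuousLinearMap.proj (R := ℝ)
        (φ := fun _ : Fin m => ℝ) i) 0 :=
  ((hasFDerivAt_sum_mul_sub_half_sq _).add_const _).sub_const _

end

theorem global_min_gives_critical_point_general (N m : ℕ) (D : Matrix (Fin N) (Fin N) ℝ)
    (A B : Matrix (Fin m) (Fin N) ℝ) (c : Fin m → ℝ) (e : Fin N → ℝ)
    (τ : Fin N → ℝ) (lam : Fin m → ℝ)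
    (hval : Pfun N m D A B c e τ lam = -((1 / 2) * (e ⬝ᵥ e))) :
    Xi0 N m D A B c e τ lam 0 = -((1 / 2) * (e ⬝ᵥ e)) ∧
    (∀ (τ' : Fin N → ℝ) (lam' : Fin m → ℝ),
      Xi0 N m D A B c e τ lam 0 ≤ Xi0 N m D A B c e τ' lam' 0) ∧
    HasFDerivAt (fun σ : Fin m → ℝ => Xi0 N m D A B c e τ lam σ)
      (0 : ((Fin m → ℝ) →L[ℝ] ℝ)) 0 ∧
    (∀ i, xi N m A B c τ lam i = 0) ∧
    D.mulVec τ + e + (A.transpose).mulVec lam = 0 := by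
  have hdot_nonneg (v : Fin N → ℝ) : 0 ≤ v ⬝ᵥ v :=
    Finset.sum_nonneg fun j _ => mul_self_nonneg _
  have hres_nonneg := hdot_nonneg (D *ᵥ τ + e + Aᵀ *ᵥ lam)
  have hξ_nonneg : 0 ≤ ∑ i, xi N m A B c τ lam i ^ 2 := by positivity
  rw [Pfun_eq_half_sum_xi_sq_add_Xi0_zero, Xi0_zero_eq_half_residual_sq_sub] at hval
  have hξ : ∀ i, xi N m A B c τ lam i = 0 := by
    have : ∑ i, xi N m A B c τ lam i ^ 2 = 0 := by linarith
    simpa using (Finset.sum_eq_zero_iff_of_nonneg fun i _ => sq_nonneg _).mp this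
  have hres : D *ᵥ τ + e + Aᵀ *ᵥ lam = 0 := dotProduct_self_eq_zero.mp (by linarith)
  have hXi0 : Xi0 N m D A B c e τ lam 0 = -((1 / 2) * (e ⬝ᵥ e)) := by
    simp [Xi0_zero_eq_half_residual_sq_sub, hres]
  refine ⟨hXi0, fun τ' lam' => ?_, ?_, hξ, hres⟩
  · rw [hXi0, Xi0_zero_eq_half_residual_sq_sub]
    linarith [hdot_nonneg (D *ᵥ τ' + e + Aᵀ *ᵥ lam')]
  · simpa [hξ] using hasFDerivAt_Xi0 D A B c e τ lam

theorem global_min_gives_critical_point (N m : ℕ) (D : Matrix (Fin N) (Fin N) ℝ)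
    (A B : Matrix (Fin m) (Fin N) ℝ) (c : Fin m → ℝ) (e : Fin N → ℝ)
    (τ : Fin N → ℝ) (lam : Fin m → ℝ)
    (hval : Pfun N m D A B c e τ lam = -((1 / 2) * (e ⬝ᵥ e)))
    (hmin : ∀ (τ' : Fin N → ℝ) (lam' : Fin m → ℝ),
      Pfun N m D A B c e τ lam ≤ Pfun N m D A B c e τ' lam') :
    Xi0 N m D A B c e τ lam 0 = -((1 / 2) * (e ⬝ᵥ e)) ∧
    (∀ (τ' : Fin N → ℝ) (lam' : Fin m → ℝ),
      Xi0 N m D A B c e τ lam 0 ≤ Xi0 N m D A B c e τ' lam' 0) ∧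
    HasFDerivAt (fun σ : Fin m → ℝ => Xi0 N m D A B c e τ lam σ)
      (0 : ((Fin m → ℝ) →L[ℝ] ℝ)) 0 ∧
    (∀ i, xi N m A B c τ lam i = 0) ∧
    D.mulVec τ + e + (A.transpose).mulVec lam = 0 :=
  global_min_gives_critical_point_general N m D A B c e τ lam hval
end
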